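/- Let d ∈ {1,2,3}, T > 0 and let γ, α, D, R₀ > 0. Let ψ, φ : [0,T] × ℝᵈ → ℝ be C² functions with ψ ≥ 0 and 0 ≤ φ ≤ 1, with ψ(t,·) supported in a fixed compact set K ⊂ ℝᵈ for all t ∈ [0,T], satisfying on (0,T) × ℝᵈ the system ∂_t ψ + ∇_x·[ψ φ(1-φ)(α∇_x φ - D∇_x ψ)] = R₀ ψ (1-φ-ψ) and ∂_t φ = -γ φ ψ. Set C₂ = (2/D)(D R₀ + α R₀ + α γ) and E(t) = ∫_{ℝᵈ} ψ(t)·((D/2)ψ(t) - α φ(t)) dx. Then for all t ∈ (0,T), E'(t) ≤ C₂ E(t) + α(C₂ + R₀) ∫_{ℝᵈ} ψ(t,x) dx. -/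

import Mathlib

open MeasureTheory

/-- Divergence of a vector field on `ℝᵈ`: the sum of the coordinate-wise
partial derivatives, `(∇·F)(x) = ∑ᵢ ∂ᵢ Fᵢ(x)`. -/
noncomputable def ediv {d : ℕ} (F : EuclideanSpace ℝ (Fin d) → EuclideanSpace ℝ (Fin d))
    (x : EuclideanSpace ℝ (Fin d)) : ℝ :=
  ∑ i, fderiv ℝ F x (EuclideanSpace.single i 1) i

section Aux

open Set Metric

lemma pi_div_zero' {n : ℕ} (G : (Fin (n+1) → ℝ) → (Fin (n+1) → ℝ))
    (hG : ContDiff ℝ 1 G) (hc : HasCompactSupport G) :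
    ∫ y, ∑ i, fderiv ℝ G y (Pi.single i 1) i = 0 := by
  obtain ⟨R₀, hR₀⟩ := hc.isBounded.subset_closedBall 0
  set R : ℝ := max R₀ 0 with hRdef
  have hR : tsupport G ⊆ closedBall 0 R :=
    hR₀.trans (closedBall_subset_closedBall (le_max_left _ _))
  have hRnn : (0:ℝ) ≤ R := le_max_right _ _
  set a : Fin (n+1) → ℝ := fun _ => -(R+1) with ha
  set b : Fin (n+1) → ℝ := fun _ => (R+1) with hb
  have hle : a ≤ b := fun i => by simp [ha, hb]; linarith
  have hout : ∀ y : Fin (n+1) → ℝ, y ∉ tsupport G →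
      (∑ i, fderiv ℝ G y (Pi.single i 1) i) = 0 := by
    intro y hy
    have : fderiv ℝ G y = 0 := by
      by_contra h
      exact hy (support_fderiv_subset ℝ (by simpa [Function.mem_support] using h))
    simp [this]
  have hbig : ∀ y : Fin (n+1) → ℝ, ∀ i, R < |y i| → y ∉ tsupport G := by
    intro y i hi hy
    have := hR hy
    simp only [mem_closedBall, dist_zero_right] at this
    exact absurd (le_trans (by simpa using norm_le_pi_norm y i) this) (not_le.mpr hi)
  have key := MeasureTheory.integral_divergence_of_hasFDerivAt_off_countable a b hle G
    (fderiv ℝ G) ∅ Set.countable_empty hG.continuous.continuousOn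
    (fun x _ => hG.differentiable one_ne_zero x |>.hasFDerivAt)
    (by
      apply ContinuousOn.integrableOn_compact isCompact_Icc
      apply Continuous.continuousOn
      apply continuous_finset_sum
      intro i _
      exact (continuous_apply i).comp
        ((ContinuousLinearMap.apply ℝ (Fin (n+1) → ℝ) (Pi.single i 1)).continuous.comp
          (hG.continuous_fderiv one_ne_zero)))
  have hfull : (∫ y in Icc a b, ∑ i, fderiv ℝ G y (Pi.single i 1) i)
      = ∫ y, ∑ i, fderiv ℝ G y (Pi.single i 1) i := by
    apply setIntegral_eq_integral_of_forall_compl_eq_zero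
    intro y hy
    simp only [Set.mem_Icc, not_and_or, not_forall, Pi.le_def] at hy
    apply hout
    rcases hy with ⟨i, hi⟩ | ⟨i, hi⟩
    · refine hbig y i ?_
      simp only [ha, not_le] at hi
      rw [lt_abs]; right; linarith
    · refine hbig y i ?_
      simp only [hb, not_le] at hi
      rw [lt_abs]; left; linarith
  rw [← hfull, key]
  apply Finset.sum_eq_zero
  intro i _
  have hzero : ∀ c : ℝ, R < |c| → ∀ x, G (i.insertNth c x) i = 0 := by
    intro c hc x
    have : (i.insertNth c x) ∉ tsupport G := by
      apply hbig _ i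
      simpa using hc
    have hG0 : G (i.insertNth c x) = 0 := image_eq_zero_of_notMem_tsupport this
    simp [hG0]
  have h1 : (R:ℝ) < |b i| := by
    show R < |R+1|
    rw [abs_of_nonneg (by linarith)]; linarith
  have h2 : (R:ℝ) < |a i| := by
    show R < |-(R+1)|
    rw [abs_neg, abs_of_nonneg (by linarith)]; linarith
  rw [integral_congr_ae (Filter.Eventually.of_forall (hzero _ h1)),
    integral_congr_ae (Filter.Eventually.of_forall (hzero _ h2))]
  simp

lemma integral_ediv_eq_zero' {d : ℕ} (H : EuclideanSpace ℝ (Fin d) → EuclideanSpace ℝ (Fin d))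
    (hH : ContDiff ℝ 1 H) (hc : HasCompactSupport H) : ∫ x, ediv H x = 0 := by
  cases d with
  | zero => simp [ediv]
  | succ n =>
    set eL := PiLp.continuousLinearEquiv 2 ℝ (fun _ : Fin (n+1) => ℝ) with heL
    set G : (Fin (n+1) → ℝ) → (Fin (n+1) → ℝ) := fun y => eL (H (eL.symm y)) with hGdef
    have hG : ContDiff ℝ 1 G :=
      (eL.contDiff).comp (hH.comp eL.symm.contDiff)
    have hcG : HasCompactSupport G := by
      have h1 : HasCompactSupport (fun x => eL (H x)) :=
        hc.comp_left (map_zero eL)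
      exact h1.comp_homeomorph eL.symm.toHomeomorph
    have hdG : ∀ y, fderiv ℝ G y =
        ((eL : EuclideanSpace ℝ (Fin (n+1)) →L[ℝ] (Fin (n+1) → ℝ)).comp
          (fderiv ℝ H (eL.symm y))).comp
          (eL.symm : (Fin (n+1) → ℝ) →L[ℝ] EuclideanSpace ℝ (Fin (n+1))) := by
      intro y
      have h1 : HasFDerivAt H (fderiv ℝ H (eL.symm y)) (eL.symm y) :=
        (hH.differentiable one_ne_zero _).hasFDerivAt
      exact ((eL.hasFDerivAt.comp _ h1).comp y eL.symm.hasFDerivAt).fderiv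
    have hdiv : ∀ y, (∑ i, fderiv ℝ G y (Pi.single i 1) i) = ediv H (eL.symm y) := by
      intro y
      rw [hdG y]
      apply Finset.sum_congr rfl
      intro i _
      simp only [ContinuousLinearMap.comp_apply, ContinuousLinearEquiv.coe_coe]
      congr 1
    have hmp := (EuclideanSpace.volume_preserving_symm_measurableEquiv_toLp (Fin (n+1))).symm
    have hemb : MeasurableEmbedding (MeasurableEquiv.toLp 2 (Fin (n+1) → ℝ)) :=
      (MeasurableEquiv.toLp 2 (Fin (n+1) → ℝ)).measurableEmbedding
    have := hmp.integral_comp hemb (ediv H)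
    rw [← this, ← pi_div_zero' G hG hcG]
    apply integral_congr_ae
    filter_upwards with y
    rw [hdiv y]
    rfl

lemma euclidean_decomp' {d : ℕ} (v : EuclideanSpace ℝ (Fin d)) :
    ∑ i, v i • EuclideanSpace.single i (1:ℝ) = v := by
  ext j
  have : (∑ i, v i • EuclideanSpace.single i (1:ℝ)) j
      = ∑ i, (v i • EuclideanSpace.single i (1:ℝ)) j :=
    by rw [WithLp.ofLp_sum, Finset.sum_apply]
  rw [this]
  simp only [PiLp.smul_apply, EuclideanSpace.single_apply, smul_eq_mul]
  simp [Finset.sum_ite_eq', mul_comm]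

lemma ediv_smul' {d : ℕ} (g : EuclideanSpace ℝ (Fin d) → ℝ)
    (F : EuclideanSpace ℝ (Fin d) → EuclideanSpace ℝ (Fin d))
    (x : EuclideanSpace ℝ (Fin d)) (hg : DifferentiableAt ℝ g x)
    (hF : DifferentiableAt ℝ F x) :
    ediv (fun y => g y • F y) x = fderiv ℝ g x (F x) + g x * ediv F x := by
  unfold ediv
  have hfd : fderiv ℝ (fun y => g y • F y) x
      = g x • fderiv ℝ F x + (fderiv ℝ g x).smulRight (F x) := fderiv_smul hg hF
  have key : ∀ i, fderiv ℝ (fun y => g y • F y) x (EuclideanSpace.single i 1) i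
      = g x * fderiv ℝ F x (EuclideanSpace.single i 1) i
        + fderiv ℝ g x (EuclideanSpace.single i 1) * F x i := by
    intro i
    rw [hfd]
    simp [ContinuousLinearMap.add_apply, ContinuousLinearMap.smul_apply,
      ContinuousLinearMap.smulRight_apply]
  rw [Finset.sum_congr rfl (fun i _ => key i), Finset.sum_add_distrib, Finset.mul_sum]
  have : ∑ i, fderiv ℝ g x (EuclideanSpace.single i 1) * F x i = fderiv ℝ g x (F x) := by
    conv_rhs => rw [← euclidean_decomp' (F x)]
    rw [map_sum]
    apply Finset.sum_congr rfl
    intro i _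
    rw [(fderiv ℝ g x).map_smul]
    simp [mul_comm]
  rw [this]; ring

lemma cont_integrable' {d : ℕ} {K : Set (EuclideanSpace ℝ (Fin d))} (hK : IsCompact K)
    {f : EuclideanSpace ℝ (Fin d) → ℝ} (hf : Continuous f)
    (h : Function.support f ⊆ K) : Integrable f := by
  have h1 : HasCompactSupport f :=
    HasCompactSupport.intro hK (fun x hx => by
      by_contra h0
      exact hx (h h0))
  exact hf.integrable_of_hasCompactSupport h1

lemma gradient_coords' {d : ℕ} (h : EuclideanSpace ℝ (Fin d) → ℝ) (y : EuclideanSpace ℝ (Fin d)) :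
    gradient h y = (PiLp.continuousLinearEquiv 2 ℝ (fun _ : Fin d => ℝ)).symm
      (fun i => fderiv ℝ h y (EuclideanSpace.single i 1)) := by
  ext j
  have h1 : (inner ℝ (gradient h y) (EuclideanSpace.single j (1:ℝ)) : ℝ)
      = fderiv ℝ h y (EuclideanSpace.single j 1) :=
    InnerProductSpace.toDual_symm_apply
  rw [EuclideanSpace.inner_single_right] at h1
  simp only [PiLp.continuousLinearEquiv_symm_apply, PiLp.toLp_apply]
  simpa using h1

lemma gradient_contDiff' {d : ℕ} {h : EuclideanSpace ℝ (Fin d) → ℝ} (hh : ContDiff ℝ 2 h) :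
    ContDiff ℝ 1 (gradient h) := by
  have heq : gradient h = fun y => (PiLp.continuousLinearEquiv 2 ℝ (fun _ : Fin d => ℝ)).symm
      (fun i => fderiv ℝ h y (EuclideanSpace.single i 1)) := funext (gradient_coords' h)
  rw [heq]
  have h2 : ContDiff ℝ 1 (fun y : EuclideanSpace ℝ (Fin d) =>
      (fun i => fderiv ℝ h y (EuclideanSpace.single i 1) : Fin d → ℝ)) :=
    contDiff_pi.mpr fun i => by
      have := (ContinuousLinearMap.apply ℝ ℝ (EuclideanSpace.single i 1)).contDiff.comp
        (hh.fderiv_right (m := 1) (by norm_num))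
      exact this
  exact ((PiLp.continuousLinearEquiv 2 ℝ (fun _ : Fin d => ℝ)).symm.contDiff).comp h2

end Aux

set_option maxHeartbeats 2000000 in
/-- Energy differential inequality (Step 2 of Proposition 1): with `ψ ≥ 0`,
`0 ≤ φ ≤ 1`, `C₂ = (2/D)(DR₀ + αR₀ + αγ)` and
`E(t) = ∫ ψ((D/2)ψ - αφ)`, one has `E'(t) ≤ C₂ E(t) + α(C₂ + R₀) ∫ ψ(t)`
for all `t ∈ (0,T)`. -/
theorem stmt_5 (d : ℕ) (hd : d = 1 ∨ d = 2 ∨ d = 3) (T γ α D R₀ : ℝ)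
    (hT : 0 < T) (hγ : 0 < γ) (hα : 0 < α) (hD : 0 < D) (hR : 0 < R₀)
    (ψ φ : ℝ × EuclideanSpace ℝ (Fin d) → ℝ)
    (hψC2 : ContDiffOn ℝ 2 ψ (Set.Icc 0 T ×ˢ Set.univ))
    (hφC2 : ContDiffOn ℝ 2 φ (Set.Icc 0 T ×ˢ Set.univ))
    (hψnn : ∀ t ∈ Set.Icc (0 : ℝ) T, ∀ x, 0 ≤ ψ (t, x))
    (hφ01 : ∀ t ∈ Set.Icc (0 : ℝ) T, ∀ x, 0 ≤ φ (t, x) ∧ φ (t, x) ≤ 1)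
    (K : Set (EuclideanSpace ℝ (Fin d))) (hK : IsCompact K)
    (hsupp : ∀ t ∈ Set.Icc (0 : ℝ) T, (Function.support fun x => ψ (t, x)) ⊆ K)
    (hpde1 : ∀ t ∈ Set.Ioo (0 : ℝ) T, ∀ x,
      deriv (fun s => ψ (s, x)) t +
        ediv (fun y => (ψ (t, y) * (φ (t, y) * (1 - φ (t, y)))) •
          (α • gradient (fun z => φ (t, z)) y - D • gradient (fun z => ψ (t, z)) y)) x
        = R₀ * ψ (t, x) * (1 - φ (t, x) - ψ (t, x)))
    (hpde2 : ∀ t ∈ Set.Ioo (0 : ℝ) T, ∀ x,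
      deriv (fun s => φ (s, x)) t = -γ * φ (t, x) * ψ (t, x))
    (C₂ : ℝ) (hC₂ : C₂ = 2 / D * (D * R₀ + α * R₀ + α * γ))
    (E : ℝ → ℝ) (hE : ∀ τ, E τ = ∫ x, ψ (τ, x) * (D / 2 * ψ (τ, x) - α * φ (τ, x))) :
    ∀ t ∈ Set.Ioo (0 : ℝ) T,
      DifferentiableAt ℝ E t ∧
      deriv E t ≤ C₂ * E t + α * (C₂ + R₀) * ∫ x, ψ (t, x) := by
  intro t ht
  obtain ⟨ht0, htT⟩ := ht
  have hIoo : t ∈ Set.Ioo (0:ℝ) T := ⟨ht0, htT⟩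
  have hIcc : t ∈ Set.Icc (0:ℝ) T := ⟨le_of_lt ht0, le_of_lt htT⟩
  -- basic regularity
  have hOpen : IsOpen (Set.Ioo (0:ℝ) T ×ˢ (Set.univ : Set (EuclideanSpace ℝ (Fin d)))) := isOpen_Ioo.prod isOpen_univ
  have hsub : Set.Ioo (0:ℝ) T ×ˢ (Set.univ : Set (EuclideanSpace ℝ (Fin d))) ⊆ Set.Icc 0 T ×ˢ Set.univ :=
    Set.prod_mono Set.Ioo_subset_Icc_self (le_refl _)
  have hψAt : ∀ s ∈ Set.Ioo (0:ℝ) T, ∀ x : EuclideanSpace ℝ (Fin d), ContDiffAt ℝ 2 ψ (s, x) := by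
    intro s hs x
    apply (hψC2.mono hsub).contDiffAt
    apply hOpen.mem_nhds
    exact Set.mem_prod.mpr ⟨hs, Set.mem_univ x⟩
  have hφAt : ∀ s ∈ Set.Ioo (0:ℝ) T, ∀ x : EuclideanSpace ℝ (Fin d), ContDiffAt ℝ 2 φ (s, x) := by
    intro s hs x
    apply (hφC2.mono hsub).contDiffAt
    apply hOpen.mem_nhds
    exact Set.mem_prod.mpr ⟨hs, Set.mem_univ x⟩
  -- time derivatives
  have hcurve : ∀ (s : ℝ) (x : EuclideanSpace ℝ (Fin d)), HasDerivAt (fun r : ℝ => ((r, x) : ℝ × EuclideanSpace ℝ (Fin d))) (1, 0) s :=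
    fun s x => (hasDerivAt_id s).prodMk (hasDerivAt_const s x)
  have hψd : ∀ s ∈ Set.Ioo (0:ℝ) T, ∀ x : EuclideanSpace ℝ (Fin d),
      HasDerivAt (fun r => ψ (r, x)) (fderiv ℝ ψ (s, x) (1, 0)) s := by
    intro s hs x
    have h1 : HasFDerivAt ψ (fderiv ℝ ψ (s, x)) (s, x) :=
      ((hψAt s hs x).differentiableAt two_ne_zero).hasFDerivAt
    exact h1.comp_hasDerivAt s (hcurve s x)
  have hφd : ∀ s ∈ Set.Ioo (0:ℝ) T, ∀ x : EuclideanSpace ℝ (Fin d),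
      HasDerivAt (fun r => φ (r, x)) (fderiv ℝ φ (s, x) (1, 0)) s := by
    intro s hs x
    have h1 : HasFDerivAt φ (fderiv ℝ φ (s, x)) (s, x) :=
      ((hφAt s hs x).differentiableAt two_ne_zero).hasFDerivAt
    exact h1.comp_hasDerivAt s (hcurve s x)
  have hψdd : ∀ s ∈ Set.Ioo (0:ℝ) T, ∀ x : EuclideanSpace ℝ (Fin d),
      deriv (fun r => ψ (r, x)) s = fderiv ℝ ψ (s, x) (1, 0) :=
    fun s hs x => (hψd s hs x).deriv
  have hφdd : ∀ s ∈ Set.Ioo (0:ℝ) T, ∀ x : EuclideanSpace ℝ (Fin d),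
      deriv (fun r => φ (r, x)) s = fderiv ℝ φ (s, x) (1, 0) :=
    fun s hs x => (hφd s hs x).deriv
  -- ψ vanishes off K, together with its time derivative
  have hψ0 : ∀ s ∈ Set.Icc (0:ℝ) T, ∀ x ∉ K, ψ (s, x) = 0 := by
    intro s hs x hx
    by_contra h0
    exact hx (hsupp s hs h0)
  have hψd0 : ∀ s ∈ Set.Ioo (0:ℝ) T, ∀ x ∉ K, deriv (fun r => ψ (r, x)) s = 0 := by
    intro s hs x hx
    have heq : (fun r => ψ (r, x)) =ᶠ[nhds s] (fun _ => (0:ℝ)) := by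
      filter_upwards [Ioo_mem_nhds hs.1 hs.2] with r hr
      exact hψ0 r (Set.mem_Icc_of_Ioo hr) x hx
    rw [heq.deriv_eq, deriv_const]
  -- the integrand and its time derivative
  set f : ℝ → EuclideanSpace ℝ (Fin d) → ℝ := fun s x => ψ (s, x) * (D / 2 * ψ (s, x) - α * φ (s, x)) with hf
  set f' : ℝ → EuclideanSpace ℝ (Fin d) → ℝ := fun s x =>
    fderiv ℝ ψ (s, x) (1, 0) * (D * ψ (s, x) - α * φ (s, x))
      - α * ψ (s, x) * fderiv ℝ φ (s, x) (1, 0) with hf'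
  have hfD : ∀ s ∈ Set.Ioo (0:ℝ) T, ∀ x : EuclideanSpace ℝ (Fin d),
      HasDerivAt (fun r => f r x) (f' s x) s := by
    intro s hs x
    have h1 := hψd s hs x
    have h2 := hφd s hs x
    have := h1.mul (((h1.const_mul (D/2)).sub (h2.const_mul α)))
    refine HasDerivAt.congr_deriv this ?_
    simp only [hf', Pi.sub_apply]
    ring
  -- continuity of section maps
  have hψcont : ∀ s ∈ Set.Ioo (0:ℝ) T, Continuous (fun x : EuclideanSpace ℝ (Fin d) => ψ (s, x)) := by
    intro s hs
    apply continuous_iff_continuousAt.mpr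
    intro x
    exact (hψAt s hs x).continuousAt.comp (Continuous.continuousAt (by fun_prop))
  have hφcont : ∀ s ∈ Set.Ioo (0:ℝ) T, Continuous (fun x : EuclideanSpace ℝ (Fin d) => φ (s, x)) := by
    intro s hs
    apply continuous_iff_continuousAt.mpr
    intro x
    exact (hφAt s hs x).continuousAt.comp (Continuous.continuousAt (by fun_prop))
  have hfderivψ : ContinuousOn (fderiv ℝ ψ) (Set.Ioo (0:ℝ) T ×ˢ (Set.univ : Set (EuclideanSpace ℝ (Fin d)))) := by
    have := (hψC2.mono hsub).continuousOn_fderiv_of_isOpen hOpen one_le_two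
    exact this
  have hfderivφ : ContinuousOn (fderiv ℝ φ) (Set.Ioo (0:ℝ) T ×ˢ (Set.univ : Set (EuclideanSpace ℝ (Fin d)))) := by
    have := (hφC2.mono hsub).continuousOn_fderiv_of_isOpen hOpen one_le_two
    exact this
  have hg'cont : ContinuousOn (fun p : ℝ × EuclideanSpace ℝ (Fin d) =>
      fderiv ℝ ψ p (1, 0) * (D * ψ p - α * φ p) - α * ψ p * fderiv ℝ φ p (1, 0))
      (Set.Ioo (0:ℝ) T ×ˢ (Set.univ : Set (EuclideanSpace ℝ (Fin d)))) := by
    have c1 : ContinuousOn (fun p : ℝ × EuclideanSpace ℝ (Fin d) => fderiv ℝ ψ p (1, 0))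
        (Set.Ioo (0:ℝ) T ×ˢ (Set.univ : Set (EuclideanSpace ℝ (Fin d)))) :=
      (ContinuousLinearMap.apply ℝ ℝ ((1:ℝ), (0:EuclideanSpace ℝ (Fin d)))).continuous.comp_continuousOn hfderivψ
    have c2 : ContinuousOn (fun p : ℝ × EuclideanSpace ℝ (Fin d) => fderiv ℝ φ p (1, 0))
        (Set.Ioo (0:ℝ) T ×ˢ (Set.univ : Set (EuclideanSpace ℝ (Fin d)))) :=
      (ContinuousLinearMap.apply ℝ ℝ ((1:ℝ), (0:EuclideanSpace ℝ (Fin d)))).continuous.comp_continuousOn hfderivφ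
    have cψ : ContinuousOn ψ (Set.Ioo (0:ℝ) T ×ˢ (Set.univ : Set (EuclideanSpace ℝ (Fin d)))) :=
      (hψC2.mono hsub).continuousOn
    have cφ : ContinuousOn φ (Set.Ioo (0:ℝ) T ×ˢ (Set.univ : Set (EuclideanSpace ℝ (Fin d)))) :=
      (hφC2.mono hsub).continuousOn
    exact (c1.mul ((cψ.const_smul D).sub (cφ.const_smul α))).sub
      ((cψ.const_smul α).mul c2)
  -- choose ε
  set ε : ℝ := min t (T - t) / 2 with hεdef
  have hε0 : 0 < ε := div_pos (lt_min ht0 (sub_pos.mpr htT)) two_pos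
  have he1 : ε ≤ t / 2 := by
    rw [hεdef]
    have : min t (T - t) ≤ t := min_le_left _ _
    linarith
  have he2 : ε ≤ (T - t) / 2 := by
    rw [hεdef]
    have : min t (T - t) ≤ T - t := min_le_right _ _
    linarith
  have hball : Metric.ball t ε ⊆ Set.Ioo (0:ℝ) T := by
    intro s hs
    rw [Metric.mem_ball, Real.dist_eq, abs_lt] at hs
    constructor <;> nlinarith [hs.1, hs.2]
  have hballIcc : Metric.ball t ε ⊆ Set.Icc (t - ε) (t + ε) := by
    intro s hs
    rw [Metric.mem_ball, Real.dist_eq, abs_lt] at hs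
    constructor <;> linarith [hs.1, hs.2]
  -- bound
  have hJK : IsCompact ((Set.Icc (t - ε) (t + ε)) ×ˢ K) := isCompact_Icc.prod hK
  have hJsub : (Set.Icc (t - ε) (t + ε)) ×ˢ K
      ⊆ Set.Ioo (0:ℝ) T ×ˢ (Set.univ : Set (EuclideanSpace ℝ (Fin d))) := by
    rintro ⟨s, x⟩ ⟨hs, -⟩
    refine ⟨⟨?_, ?_⟩, trivial⟩
    · have := hs.1; nlinarith
    · have := hs.2; nlinarith
  obtain ⟨M, hM⟩ := hJK.exists_bound_of_continuousOn (hg'cont.mono hJsub)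
  set bound : EuclideanSpace ℝ (Fin d) → ℝ := K.indicator (fun _ => M) with hbound
  have hbound_int : Integrable bound :=
    (integrable_indicator_iff hK.measurableSet).mpr
      (integrableOn_const hK.measure_lt_top.ne)
  have h_bound : ∀ᵐ x : EuclideanSpace ℝ (Fin d), ∀ s ∈ Metric.ball t ε, ‖f' s x‖ ≤ bound x := by
    filter_upwards with x
    intro s hs
    by_cases hx : x ∈ K
    · have hmem : (s, x) ∈ (Set.Icc (t - ε) (t + ε)) ×ˢ K := ⟨hballIcc hs, hx⟩
      have := hM (s, x) hmem
      rw [hbound, Set.indicator_of_mem hx]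
      exact this
    · have hs' := hball hs
      have h1 : ψ (s, x) = 0 := hψ0 s (Set.mem_Icc_of_Ioo hs') x hx
      have h2 : fderiv ℝ ψ (s, x) (1, 0) = 0 := by
        rw [← hψdd s hs' x]
        exact hψd0 s hs' x hx
      have : f' s x = 0 := by simp [hf', h1, h2]
      rw [this, hbound, Set.indicator_of_notMem hx]
      simp
  have hF_meas : ∀ᶠ s in nhds t, AEStronglyMeasurable (f s) volume := by
    filter_upwards [Ioo_mem_nhds ht0 htT] with s hs
    exact (Continuous.aestronglyMeasurable (by
      exact (hψcont s hs).mul ((continuous_const.mul (hψcont s hs)).sub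
        (continuous_const.mul (hφcont s hs)))))
  have hsuppft : ∀ s ∈ Set.Icc (0:ℝ) T, (Function.support fun x => f s x) ⊆ K := by
    intro s hs x hx
    apply hsupp s hs
    intro h0
    apply hx
    simp only [hf, Function.mem_support] at h0 ⊢
    rw [h0]; ring
  have hF_int : Integrable (f t) :=
    cont_integrable' hK ((hψcont t hIoo).mul ((continuous_const.mul (hψcont t hIoo)).sub
      (continuous_const.mul (hφcont t hIoo)))) (hsuppft t hIcc)
  have hf'cont : Continuous (f' t) := by
    have : ContinuousOn (fun x : EuclideanSpace ℝ (Fin d) => f' t x) Set.univ := by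
      have hmaps : Set.MapsTo (fun x : EuclideanSpace ℝ (Fin d) => ((t, x) : ℝ × EuclideanSpace ℝ (Fin d)))
          Set.univ (Set.Ioo (0:ℝ) T ×ˢ (Set.univ : Set (EuclideanSpace ℝ (Fin d)))) :=
        fun x _ => ⟨hIoo, trivial⟩
      exact hg'cont.comp ((Continuous.continuousOn (by fun_prop))) hmaps
    exact continuousOn_univ.mp this
  have hF'_meas : AEStronglyMeasurable (f' t) volume := hf'cont.aestronglyMeasurable
  have h_diff : ∀ᵐ x : EuclideanSpace ℝ (Fin d), ∀ s ∈ Metric.ball t ε,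
      HasDerivAt (fun r => f r x) (f' s x) s := by
    filter_upwards with x s hs
    exact hfD s (hball hs) x
  obtain ⟨hint', hderiv⟩ := hasDerivAt_integral_of_dominated_loc_of_deriv_le (Metric.ball_mem_nhds t hε0) hF_meas
    hF_int hF'_meas h_bound hbound_int h_diff
  have hEeq : E = fun s => ∫ x, f s x := funext fun τ => hE τ
  have hdiffE : DifferentiableAt ℝ E t := by
    rw [hEeq]; exact hderiv.differentiableAt
  have hderivE : deriv E t = ∫ x, f' t x := by
    rw [hEeq]; exact hderiv.deriv
  refine ⟨hdiffE, ?_⟩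
  -- fixed-time objects
  set Fv : EuclideanSpace ℝ (Fin d) → EuclideanSpace ℝ (Fin d) := fun y =>
    (ψ (t, y) * (φ (t, y) * (1 - φ (t, y)))) •
      (α • gradient (fun z => φ (t, z)) y - D • gradient (fun z => ψ (t, z)) y) with hFvdef
  set gg : EuclideanSpace ℝ (Fin d) → ℝ := fun y => D * ψ (t, y) - α * φ (t, y) with hggdef
  set A : EuclideanSpace ℝ (Fin d) → ℝ := fun x => ψ (t, x) *
    ((R₀ * (1 - φ (t, x) - ψ (t, x))) * (D * ψ (t, x) - α * φ (t, x))
      + α * γ * φ (t, x) * ψ (t, x)) with hAdef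
  -- pointwise rewrite of f' t using the PDEs
  have hptwise : ∀ x, f' t x = A x - gg x * ediv Fv x := by
    intro x
    have h1 : deriv (fun s => ψ (s, x)) t
        = R₀ * ψ (t, x) * (1 - φ (t, x) - ψ (t, x)) - ediv Fv x := by
      have := hpde1 t hIoo x
      rw [hFvdef]
      linarith [this]
    have h2 := hpde2 t hIoo x
    have e1 : fderiv ℝ ψ (t, x) (1, 0)
        = R₀ * ψ (t, x) * (1 - φ (t, x) - ψ (t, x)) - ediv Fv x := by
      rw [← hψdd t hIoo x]; exact h1
    have e2 : fderiv ℝ φ (t, x) (1, 0) = -γ * φ (t, x) * ψ (t, x) := by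
      rw [← hφdd t hIoo x]; exact h2
    simp only [hf', e1, e2, hAdef, hggdef]
    ring
  -- regularity of the fixed-time sections
  have hΨ : ContDiff ℝ 2 (fun x : EuclideanSpace ℝ (Fin d) => ψ (t, x)) := by
    rw [contDiff_iff_contDiffAt]
    intro x
    exact (hψAt t hIoo x).comp x ((contDiff_const.prodMk contDiff_id).contDiffAt)
  have hΦ : ContDiff ℝ 2 (fun x : EuclideanSpace ℝ (Fin d) => φ (t, x)) := by
    rw [contDiff_iff_contDiffAt]
    intro x
    exact (hφAt t hIoo x).comp x ((contDiff_const.prodMk contDiff_id).contDiffAt)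
  have hgradψ : ContDiff ℝ 1 (gradient (fun z : EuclideanSpace ℝ (Fin d) => ψ (t, z))) :=
    gradient_contDiff' hΨ
  have hgradφ : ContDiff ℝ 1 (gradient (fun z : EuclideanSpace ℝ (Fin d) => φ (t, z))) :=
    gradient_contDiff' hΦ
  have hFvC1 : ContDiff ℝ 1 Fv := by
    rw [hFvdef]
    exact ((hΨ.of_le one_le_two).mul ((hΦ.of_le one_le_two).mul
      (contDiff_const.sub (hΦ.of_le one_le_two)))).smul
      ((hgradφ.const_smul α).sub (hgradψ.const_smul D))
  have hggC1 : ContDiff ℝ 1 gg := by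
    rw [hggdef]
    exact (contDiff_const.mul (hΨ.of_le one_le_two)).sub
      (contDiff_const.mul (hΦ.of_le one_le_two))
  -- support facts
  have hFv0 : ∀ x ∉ K, Fv x = 0 := by
    intro x hx
    rw [hFvdef]
    simp [hψ0 t hIcc x hx]
  have hKopen : IsOpen Kᶜ := hK.isClosed.isOpen_compl
  have hcontΨ := hψcont t hIoo
  have hcontΦ := hφcont t hIoo
  have hedivW : ∀ (W : EuclideanSpace ℝ (Fin d) → EuclideanSpace ℝ (Fin d)),
      ContDiff ℝ 1 W → (∀ x ∉ K, W x = 0) →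
      Continuous (ediv W) ∧ ∀ x ∉ K, ediv W x = 0 := by
    intro W hW hW0
    constructor
    · apply continuous_finset_sum
      intro i _
      have hc1 : Continuous (fun x => fderiv ℝ W x (EuclideanSpace.single i 1)) :=
        (hW.continuous_fderiv one_ne_zero).clm_apply continuous_const
      exact (continuous_apply i).comp ((PiLp.continuous_ofLp 2 _).comp hc1)
    · intro x hx
      have heq : W =ᶠ[nhds x] (fun _ => 0) := by
        filter_upwards [hKopen.mem_nhds hx] with y hy using hW0 y hy
      have h0 : fderiv ℝ W x = 0 := by
        rw [heq.fderiv_eq]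
        exact fderiv_const_apply 0
      unfold ediv
      simp [h0]
  have hedivFv := hedivW Fv hFvC1 hFv0
  have hggcont : Continuous gg := hggC1.continuous
  have hAcont : Continuous A := by
    rw [hAdef]
    exact hcontΨ.mul (((continuous_const.mul ((continuous_const.sub hcontΦ).sub
      hcontΨ)).mul ((continuous_const.mul hcontΨ).sub
      (continuous_const.mul hcontΦ))).add ((continuous_const.mul hcontΦ).mul hcontΨ))
  have hA0 : Function.support A ⊆ K := by
    intro x hx
    by_contra hxK
    apply hx
    simp only [hAdef, Function.mem_support]
    rw [hψ0 t hIcc x hxK]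
    ring
  have hIA : Integrable A := cont_integrable' hK hAcont hA0
  have hIgdiv : Integrable (fun x => gg x * ediv Fv x) := by
    apply cont_integrable' hK (hggcont.mul hedivFv.1)
    intro x hx
    by_contra hxK
    apply hx
    show gg x * ediv Fv x = 0
    rw [hedivFv.2 x hxK]
    ring
  -- integration by parts
  have hHvC1 : ContDiff ℝ 1 (fun y => gg y • Fv y) := hggC1.smul hFvC1
  have hHv0 : ∀ x ∉ K, gg x • Fv x = 0 := fun x hx => by rw [hFv0 x hx]; simp
  have hHvcs : HasCompactSupport (fun y => gg y • Fv y) :=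
    HasCompactSupport.intro hK hHv0
  have hibp0 : ∫ x, ediv (fun y => gg y • Fv y) x = 0 :=
    integral_ediv_eq_zero' _ hHvC1 hHvcs
  have hsplitpt : ∀ x, gg x * ediv Fv x
      = ediv (fun y => gg y • Fv y) x - fderiv ℝ gg x (Fv x) := by
    intro x
    rw [ediv_smul' gg Fv x (hggC1.differentiable one_ne_zero x) (hFvC1.differentiable one_ne_zero x)]
    ring
  have hedivHv := hedivW _ hHvC1 hHv0
  have hIedivHv : Integrable (ediv (fun y => gg y • Fv y)) := by
    apply cont_integrable' hK hedivHv.1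
    intro x hx
    by_contra hxK
    exact hx (hedivHv.2 x hxK)
  have hfggcont : Continuous (fun x => fderiv ℝ gg x (Fv x)) :=
    (hggC1.continuous_fderiv one_ne_zero).clm_apply hFvC1.continuous
  have hIfgg : Integrable (fun x => fderiv ℝ gg x (Fv x)) := by
    apply cont_integrable' hK hfggcont
    intro x hx
    by_contra hxK
    apply hx
    show fderiv ℝ gg x (Fv x) = 0
    rw [hFv0 x hxK]
    simp
  -- sign of the dissipation term
  have hdiss : ∀ x, fderiv ℝ gg x (Fv x) ≤ 0 := by
    intro x
    have hq := hφ01 t hIcc x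
    have hp := hψnn t hIcc x
    set gψ := gradient (fun z : EuclideanSpace ℝ (Fin d) => ψ (t, z)) x with hgψ
    set gφ := gradient (fun z : EuclideanSpace ℝ (Fin d) => φ (t, z)) x with hgφ
    set w : EuclideanSpace ℝ (Fin d) := α • gφ - D • gψ with hw
    set c : ℝ := ψ (t, x) * (φ (t, x) * (1 - φ (t, x))) with hc
    have hFvx : Fv x = c • w := rfl
    have hcnn : 0 ≤ c := mul_nonneg hp (mul_nonneg hq.1 (by linarith [hq.2]))
    have hdΨ : DifferentiableAt ℝ (fun y : EuclideanSpace ℝ (Fin d) => ψ (t, y)) x :=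
      (hΨ.differentiable two_ne_zero).differentiableAt
    have hdΦ : DifferentiableAt ℝ (fun y : EuclideanSpace ℝ (Fin d) => φ (t, y)) x :=
      (hΦ.differentiable two_ne_zero).differentiableAt
    have hinnerψ : ∀ v, fderiv ℝ (fun y : EuclideanSpace ℝ (Fin d) => ψ (t, y)) x v
        = (inner ℝ gψ v : ℝ) := fun v => (InnerProductSpace.toDual_symm_apply).symm
    have hinnerφ : ∀ v, fderiv ℝ (fun y : EuclideanSpace ℝ (Fin d) => φ (t, y)) x v
        = (inner ℝ gφ v : ℝ) := fun v => (InnerProductSpace.toDual_symm_apply).symm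
    have hdgg : ∀ v, fderiv ℝ gg x v
        = D * (inner ℝ gψ v : ℝ) - α * (inner ℝ gφ v : ℝ) := by
      intro v
      have e : fderiv ℝ gg x
          = D • fderiv ℝ (fun y : EuclideanSpace ℝ (Fin d) => ψ (t, y)) x
            - α • fderiv ℝ (fun y : EuclideanSpace ℝ (Fin d) => φ (t, y)) x := by
        rw [hggdef]
        rw [fderiv_fun_sub ((hdΨ.const_mul D)) ((hdΦ.const_mul α)),
          fderiv_const_mul hdΨ D, fderiv_const_mul hdΦ α]
      rw [e]
      simp only [ContinuousLinearMap.sub_apply, ContinuousLinearMap.smul_apply, smul_eq_mul]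
      rw [hinnerψ v, hinnerφ v]
    have hkey : fderiv ℝ gg x (Fv x) = c * (-(inner ℝ w w : ℝ)) := by
      rw [hFvx, (fderiv ℝ gg x).map_smul, smul_eq_mul, hdgg w]
      congr 1
      rw [hw]
      simp only [inner_sub_right, real_inner_smul_right]
      have hsymm : (inner ℝ gφ gψ : ℝ) = (inner ℝ gψ gφ : ℝ) := real_inner_comm _ _
      rw [inner_sub_left, inner_sub_left, real_inner_smul_left, real_inner_smul_left,
        real_inner_smul_left, real_inner_smul_left, hsymm]
      ring
    rw [hkey]
    have hww : (0:ℝ) ≤ inner ℝ w w := real_inner_self_nonneg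
    exact mul_nonpos_iff.mpr (Or.inl ⟨hcnn, neg_nonpos.mpr hww⟩)
  have hgdiv_nonneg : 0 ≤ ∫ x, gg x * ediv Fv x := by
    have heq2 : (fun x => gg x * ediv Fv x)
        = fun x => ediv (fun y => gg y • Fv y) x - fderiv ℝ gg x (Fv x) := funext hsplitpt
    rw [heq2, integral_sub hIedivHv hIfgg, hibp0]
    have h2 : ∫ x, fderiv ℝ gg x (Fv x) ≤ 0 := integral_nonpos hdiss
    linarith
  -- final assembly
  have hintψt : Integrable (fun x => ψ (t, x)) := cont_integrable' hK hcontΨ (hsupp t hIcc)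
  have hC2nn : 0 ≤ C₂ := by
    rw [hC₂]
    positivity
  have hpoint : ∀ x, A x ≤ C₂ * f t x + α * (C₂ + R₀) * ψ (t, x) := by
    intro x
    have hp := hψnn t hIcc x
    have hq := hφ01 t hIcc x
    have hC2' : C₂ * D = 2 * (D * R₀ + α * R₀ + α * γ) := by
      rw [hC₂]
      field_simp
    have key : C₂ * f t x + α * (C₂ + R₀) * ψ (t, x) - A x
        = α*R₀*(ψ (t,x)^2*(1-φ (t,x))) + α*γ*(ψ (t,x)^2*(1-φ (t,x)))
          + α*C₂*(ψ (t,x)*(1-φ (t,x))) + α*R₀*(ψ (t,x)*(1+φ (t,x)-φ (t,x)^2))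
          + R₀*D*(φ (t,x)*ψ (t,x)^2) + R₀*D*ψ (t,x)^3 := by
      simp only [hf, hAdef]
      linear_combination (ψ (t,x)^2 / 2) * hC2'
    have hq1 : (0:ℝ) ≤ 1 - φ (t,x) := by linarith only [hq.2]
    have hq2 : (0:ℝ) ≤ 1 + φ (t,x) - φ (t,x)^2 := by
      have h2 : (0:ℝ) ≤ (1 - φ (t,x)) * (1 + φ (t,x)) :=
        mul_nonneg hq1 (by linarith only [hq.1])
      have h3 : (1 - φ (t,x)) * (1 + φ (t,x)) = 1 - φ (t,x)^2 := by ring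
      linarith only [h2, h3, hq.1]
    have n1 : 0 ≤ ψ (t,x)^2*(1-φ (t,x)) := mul_nonneg (sq_nonneg _) hq1
    have n2 : 0 ≤ ψ (t,x)*(1-φ (t,x)) := mul_nonneg hp hq1
    have n3 : 0 ≤ ψ (t,x)*(1+φ (t,x)-φ (t,x)^2) := mul_nonneg hp hq2
    have n4 : 0 ≤ φ (t,x)*ψ (t,x)^2 := mul_nonneg hq.1 (sq_nonneg _)
    have n5 : 0 ≤ ψ (t,x)^3 := pow_nonneg hp 3
    have m1 : 0 ≤ α*R₀*(ψ (t,x)^2*(1-φ (t,x))) :=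
      mul_nonneg (mul_nonneg hα.le hR.le) n1
    have m2 : 0 ≤ α*γ*(ψ (t,x)^2*(1-φ (t,x))) :=
      mul_nonneg (mul_nonneg hα.le hγ.le) n1
    have m3 : 0 ≤ α*C₂*(ψ (t,x)*(1-φ (t,x))) :=
      mul_nonneg (mul_nonneg hα.le hC2nn) n2
    have m4 : 0 ≤ α*R₀*(ψ (t,x)*(1+φ (t,x)-φ (t,x)^2)) :=
      mul_nonneg (mul_nonneg hα.le hR.le) n3
    have m5 : 0 ≤ R₀*D*(φ (t,x)*ψ (t,x)^2) :=
      mul_nonneg (mul_nonneg hR.le hD.le) n4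
    have m6 : 0 ≤ R₀*D*ψ (t,x)^3 :=
      mul_nonneg (mul_nonneg hR.le hD.le) n5
    linarith only [key, m1, m2, m3, m4, m5, m6]
  have hIrhs : Integrable (fun x => C₂ * f t x + α * (C₂ + R₀) * ψ (t, x)) :=
    (hF_int.const_mul C₂).add (hintψt.const_mul (α * (C₂ + R₀)))
  have hABound : ∫ x, A x ≤ ∫ x, (C₂ * f t x + α * (C₂ + R₀) * ψ (t, x)) :=
    integral_mono hIA hIrhs hpoint
  have hRHS : ∫ x, (C₂ * f t x + α * (C₂ + R₀) * ψ (t, x))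
      = C₂ * E t + α * (C₂ + R₀) * ∫ x, ψ (t, x) := by
    rw [integral_add (hF_int.const_mul C₂) (hintψt.const_mul (α * (C₂ + R₀))),
      MeasureTheory.integral_const_mul, MeasureTheory.integral_const_mul, hE t]
  have hderiv2 : deriv E t = (∫ x, A x) - ∫ x, gg x * ediv Fv x := by
    rw [hderivE]
    have heq3 : (fun x => f' t x) = fun x => A x - gg x * ediv Fv x := funext hptwise
    rw [heq3, integral_sub hIA hIgdiv]
  linarith [hgdiv_nonneg, hABound, hRHS.le, hRHS.ge, hderiv2.le, hderiv2.ge]
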